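/- Consider minimizing f(x) subject to Ax = b, where f is twice continuously differentiable with ⟪v, ∇²f(x) v⟫ ≥ k‖v‖² for all x, v (k > 0), A is a real m×n matrix of full row rank, and the problem is feasible with unique optimizer x*. Let ν* ∈ ℝᵐ satisfy the stationarity condition ∇f(x*) + Aᵀν* = 0, and define L(x) = f(x) + ⟪ν*, Ax − b⟫, so ∇L(x) = ∇f(x) + Aᵀν*. Fix d₁, d₂ > 0, q₁ > 2, 1 < q₂ < 2, and set a₁ = 2 − (q₁−2)/(q₁−1), a₂ = 2 − (q₂−2)/(q₂−1). Then every trajectory of ẋ = −d₁∇L(x)/‖∇L(x)‖^{(q₁−2)/(q₁−1)} − d₂∇L(x)/‖∇L(x)‖^{(q₂−2)/(q₂−1)} (right-hand side 0 when ∇L = 0) satisfies x(t) = x* for all t ≥ T_x := 2^{1−a₁/2}/(d₁ k (2−a₁)) + 2^{1−a₂/2}/(d₂ k (a₂−2)), for every initial condition x(0). -/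

import Mathlib

open scoped RealInnerProductSpace Classical
open Matrix

/-!
With `L(x) = f(x) + ⟪Aᵀν*, x⟫`, the bound on the Hessian makes `L` `k`-strongly convex and
`∇L(x*) = 0`, so `V = L - L(x*)` satisfies `V(y) ≥ k/2 ‖y - x*‖²` and the Polyak–Łojasiewicz
inequality `2kV ≤ ‖∇L‖²`. Along the flow `V' = -d₁‖∇L‖^{a₁} - d₂‖∇L‖^{a₂}
≤ -c₁ V^{a₁/2} - c₂ V^{a₂/2}` with `cᵢ = dᵢ(2k)^{aᵢ/2}` and `a₁/2 < 1 < a₂/2`. Comparing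
`V^{1-γ}` with a linear function, the superlinear term brings `V` below `1/k` within
`2^{1-a₂/2}/(d₂k(a₂-2))` from any start, and the sublinear one then drives it to `0` within
`2^{1-a₁/2}/(d₁k(2-a₁))`.
-/

open Set InnerProductSpace

theorem Convex.antitoneOn_of_hasDerivAt_nonpos {D : Set ℝ} (hD : Convex ℝ D) {f f' : ℝ → ℝ}
    (hf : ∀ x ∈ D, HasDerivAt f (f' x) x) (hf' : ∀ x ∈ D, f' x ≤ 0) : AntitoneOn f D :=
  antitoneOn_of_hasDerivWithinAt_nonpos hD (fun x hx => (hf x hx).continuousAt.continuousWithinAt)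
    (fun x hx => (hf x (interior_subset hx)).hasDerivWithinAt)
    (fun x hx => hf' x (interior_subset hx))

section ScalarComparison

variable {u u' : ℝ → ℝ} {c γ t₀ t₁ : ℝ}

/-- The time derivative of `u ^ (1 - γ) / (1 - γ)` is `u' u⁻ᵞ ≤ -c`. -/
theorem rpow_div_add_mul_le_of_hasDerivAt_le_neg_rpow (hγ : γ ≠ 1) (h01 : t₀ ≤ t₁)
    (hu : ∀ t ∈ Icc t₀ t₁, HasDerivAt u (u' t) t) (hpos : ∀ t ∈ Icc t₀ t₁, 0 < u t)
    (hu' : ∀ t ∈ Icc t₀ t₁, u' t ≤ -c * u t ^ γ) :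
    u t₁ ^ (1 - γ) / (1 - γ) + c * (t₁ - t₀) ≤ u t₀ ^ (1 - γ) / (1 - γ) := by
  have hγ' : 1 - γ ≠ 0 := sub_ne_zero.2 hγ.symm
  have hderiv : ∀ t ∈ Icc t₀ t₁, HasDerivAt (fun t => u t ^ (1 - γ) / (1 - γ) + c * t)
      (u' t * u t ^ (-γ) + c) t := by
    intro t ht
    refine ((((hu t ht).rpow_const (p := 1 - γ) (Or.inl (hpos t ht).ne')).div_const
      (1 - γ)).fun_add ((hasDerivAt_id' t).const_mul c)).congr_deriv ?_
    rw [show 1 - γ - 1 = -γ by ring]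
    field_simp
  have hanti := (convex_Icc t₀ t₁).antitoneOn_of_hasDerivAt_nonpos hderiv fun t ht => by
    have hcancel : u t ^ γ * u t ^ (-γ) = 1 := by
      rw [Real.rpow_neg (hpos t ht).le, mul_inv_cancel₀ (Real.rpow_pos_of_pos (hpos t ht) _).ne']
    calc u' t * u t ^ (-γ) + c ≤ -c * u t ^ γ * u t ^ (-γ) + c := by
          gcongr
          · exact (Real.rpow_pos_of_pos (hpos t ht) _).le
          · exact hu' t ht
      _ = 0 := by rw [mul_assoc, hcancel]; ring
  have := hanti (left_mem_Icc.2 h01) (right_mem_Icc.2 h01) h01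
  simp only at this
  linarith

theorem exists_le_of_hasDerivAt_le_neg_rpow_of_one_lt {M : ℝ} (hγ : 1 < γ) (hc : 0 < c)
    (hM : 0 < M) (hu : ∀ t ∈ Icc t₀ t₁, HasDerivAt u (u' t) t)
    (hu' : ∀ t ∈ Icc t₀ t₁, u' t ≤ -c * u t ^ γ)
    (ht : M ^ (1 - γ) / (c * (γ - 1)) ≤ t₁ - t₀) :
    ∃ t ∈ Icc t₀ t₁, u t ≤ M := by
  have hγ' : 0 < γ - 1 := sub_pos.2 hγ
  have h01 : t₀ ≤ t₁ := by
    have : 0 < M ^ (1 - γ) / (c * (γ - 1)) := by positivity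
    linarith
  by_contra! hgt
  have hmain := rpow_div_add_mul_le_of_hasDerivAt_le_neg_rpow hγ.ne' h01 hu
    (fun t ht => hM.trans (hgt t ht)) hu'
  have h₀ : u t₀ ^ (1 - γ) / (1 - γ) < 0 :=
    div_neg_of_pos_of_neg (Real.rpow_pos_of_pos (hM.trans (hgt t₀ (left_mem_Icc.2 h01))) _)
      (by linarith)
  have h₁ : M ^ (1 - γ) / (1 - γ) < u t₁ ^ (1 - γ) / (1 - γ) :=
    div_lt_div_of_neg_of_lt (by linarith)
      (Real.rpow_lt_rpow_of_neg hM (hgt t₁ (right_mem_Icc.2 h01)) (by linarith))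
  have hflip : M ^ (1 - γ) / (1 - γ) = -(M ^ (1 - γ) / (γ - 1)) := by rw [← div_neg, neg_sub]
  have : M ^ (1 - γ) / (γ - 1) ≤ c * (t₁ - t₀) := by
    rwa [div_mul_eq_div_div_swap, div_le_iff₀ hc, mul_comm] at ht
  linarith

theorem exists_le_zero_of_hasDerivAt_le_neg_rpow_of_lt_one {B : ℝ} (hγ : γ < 1) (hc : 0 < c)
    (hB : 0 ≤ B) (hu : ∀ t ∈ Icc t₀ t₁, HasDerivAt u (u' t) t)
    (hu' : ∀ t ∈ Icc t₀ t₁, u' t ≤ -c * u t ^ γ) (h₀ : u t₀ ≤ B)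
    (ht : B ^ (1 - γ) / (c * (1 - γ)) ≤ t₁ - t₀) :
    ∃ t ∈ Icc t₀ t₁, u t ≤ 0 := by
  have hγ' : 0 < 1 - γ := sub_pos.2 hγ
  have h01 : t₀ ≤ t₁ := by
    have : 0 ≤ B ^ (1 - γ) / (c * (1 - γ)) := by positivity
    linarith
  by_contra! hpos
  have hmain := rpow_div_add_mul_le_of_hasDerivAt_le_neg_rpow hγ.ne h01 hu hpos hu'
  have h₁ : 0 < u t₁ ^ (1 - γ) / (1 - γ) :=
    div_pos (Real.rpow_pos_of_pos (hpos t₁ (right_mem_Icc.2 h01)) _) hγ'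
  have h₀' : u t₀ ^ (1 - γ) / (1 - γ) ≤ B ^ (1 - γ) / (1 - γ) := by
    gcongr
    exact (hpos t₀ (left_mem_Icc.2 h01)).le
  have : B ^ (1 - γ) / (1 - γ) ≤ c * (t₁ - t₀) := by
    rwa [div_mul_eq_div_div_swap, div_le_iff₀ hc, mul_comm] at ht
  linarith

theorem eq_zero_of_hasDerivAt_le_neg_rpow_sub_rpow {c₁ c₂ γ₁ γ₂ M t : ℝ} (hc₁ : 0 < c₁)
    (hc₂ : 0 < c₂) (hγ₁ : γ₁ < 1) (hγ₂ : 1 < γ₂) (hM : 0 < M)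
    (hu : ∀ t, 0 ≤ t → HasDerivAt u (u' t) t) (hu₀ : ∀ t, 0 ≤ t → 0 ≤ u t)
    (hu' : ∀ t, 0 ≤ t → u' t ≤ -c₁ * u t ^ γ₁ - c₂ * u t ^ γ₂)
    (ht : M ^ (1 - γ₂) / (c₂ * (γ₂ - 1)) + M ^ (1 - γ₁) / (c₁ * (1 - γ₁)) ≤ t) :
    u t = 0 := by
  set T₂ := M ^ (1 - γ₂) / (c₂ * (γ₂ - 1))
  set T₁ := M ^ (1 - γ₁) / (c₁ * (1 - γ₁))
  have hT₂ : 0 < T₂ := div_pos (Real.rpow_pos_of_pos hM _) (mul_pos hc₂ (sub_pos.2 hγ₂))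
  have hpow : ∀ s, 0 ≤ s → ∀ γ : ℝ, 0 ≤ u s ^ γ := fun s hs γ => Real.rpow_nonneg (hu₀ s hs) γ
  have hanti : AntitoneOn u (Ici 0) :=
    (convex_Ici 0).antitoneOn_of_hasDerivAt_nonpos hu fun s hs => by
      nlinarith [hu' s hs, hpow s hs γ₁, hpow s hs γ₂]
  obtain ⟨s₂, hs₂, hus₂⟩ := exists_le_of_hasDerivAt_le_neg_rpow_of_one_lt (t₀ := 0) (t₁ := T₂)
    hγ₂ hc₂ hM (fun s hs => hu s hs.1)
    (fun s hs => by nlinarith [hu' s hs.1, hpow s hs.1 γ₁]) (by rw [sub_zero])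
  have huT₂ : u T₂ ≤ M := (hanti hs₂.1 hT₂.le hs₂.2).trans hus₂
  obtain ⟨s₁, hs₁, hus₁⟩ := exists_le_zero_of_hasDerivAt_le_neg_rpow_of_lt_one
    (t₀ := T₂) (t₁ := T₂ + T₁) hγ₁ hc₁ hM.le (fun s hs => hu s (hT₂.le.trans hs.1))
    (fun s hs => by nlinarith [hu' s (hT₂.le.trans hs.1), hpow s (hT₂.le.trans hs.1) γ₂]) huT₂
    (by rw [add_sub_cancel_left])
  have hs₁₀ : 0 ≤ s₁ := hT₂.le.trans hs₁.1
  have hs₁t : s₁ ≤ t := hs₁.2.trans ht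
  exact le_antisymm ((hanti hs₁₀ (hs₁₀.trans hs₁t) hs₁t).trans hus₁) (hu₀ t (hs₁₀.trans hs₁t))

end ScalarComparison

theorem Real.rpow_div_two_le_rpow_of_le_sq {w N a : ℝ} (hw : 0 ≤ w) (hN : 0 ≤ N)
    (h : w ≤ N ^ 2) (ha : 0 ≤ a) : w ^ (a / 2) ≤ N ^ a :=
  calc w ^ (a / 2) ≤ (N ^ 2) ^ (a / 2) := Real.rpow_le_rpow hw h (by positivity)
    _ = N ^ a := by rw [← Real.rpow_natCast, ← Real.rpow_mul hN]; ring_nf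

theorem Real.inv_rpow_div_mul_rpow {k : ℝ} (hk : 0 < k) (a d e : ℝ) :
    k⁻¹ ^ (1 - a / 2) / (d * (2 * k) ^ (a / 2) * e) = 2 ^ (1 - a / 2) / (d * k * (2 * e)) := by
  rw [Real.inv_rpow hk.le, Real.mul_rpow two_pos.le hk.le, Real.rpow_sub hk,
    Real.rpow_sub two_pos, Real.rpow_one, Real.rpow_one]
  field_simp

theorem add_deriv_add_half_le_of_le_second_deriv {φ φ' φ'' : ℝ → ℝ} {κ : ℝ}
    (hφ : ∀ s, HasDerivAt φ (φ' s) s) (hφ' : ∀ s, HasDerivAt φ' (φ'' s) s)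
    (hκ : ∀ s, κ ≤ φ'' s) :
    φ 0 + φ' 0 + κ / 2 ≤ φ 1 := by
  have hmono : Monotone fun s => φ' s - κ * s :=
    monotone_of_hasDerivAt_nonneg (fun s => (hφ' s).sub ((hasDerivAt_id' s).const_mul κ))
      fun s => by simpa using hκ s
  have hanti : AntitoneOn (fun s => φ' 0 * s + κ / 2 * s ^ 2 - φ s) (Ici 0) := by
    refine (convex_Ici 0).antitoneOn_of_hasDerivAt_nonpos
      (f' := fun s => φ' 0 + κ * s - φ' s) (fun s _ => ?_) fun s hs => ?_
    · refine ((((hasDerivAt_id' s).const_mul (φ' 0)).add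
        ((hasDerivAt_pow 2 s).const_mul (κ / 2))).sub (hφ s)).congr_deriv ?_
      ring
    · have := hmono (show (0 : ℝ) ≤ s from hs)
      simp only at this
      linarith
  have := hanti (mem_Ici.2 le_rfl) (mem_Ici.2 zero_le_one) zero_le_one
  simp only at this
  linarith

section GradientFlow

variable {F : Type*} [NormedAddCommGroup F] [InnerProductSpace ℝ F]

theorem inner_ite_neg_div_rpow_smul_sub [DecidableEq F] (g : F) {d₁ d₂ a₁ a₂ : ℝ}
    (ha₁ : a₁ ≠ 0) (ha₂ : a₂ ≠ 0) :
    ⟪g, if g = 0 then 0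
      else -((d₁ / ‖g‖ ^ (2 - a₁)) • g) - (d₂ / ‖g‖ ^ (2 - a₂)) • g⟫
      = -(d₁ * ‖g‖ ^ a₁) - d₂ * ‖g‖ ^ a₂ := by
  split_ifs with hg
  · simp [hg, Real.zero_rpow ha₁, Real.zero_rpow ha₂]
  · have hpos : 0 < ‖g‖ := norm_pos_iff.2 hg
    rw [inner_sub_right, inner_neg_right, real_inner_smul_right, real_inner_smul_right,
      real_inner_self_eq_norm_sq, Real.rpow_sub hpos, Real.rpow_sub hpos, Real.rpow_two]
    field_simp

variable {L : F → ℝ} {g : F → F} {k : ℝ}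

theorem two_mul_mul_sub_le_norm_sq (hk : 0 < k)
    (hquad : ∀ z y, L z + ⟪g z, y - z⟫ + k / 2 * ‖y - z‖ ^ 2 ≤ L y) (z y : F) :
    2 * k * (L z - L y) ≤ ‖g z‖ ^ 2 := by
  have hcs := neg_le_of_abs_le (abs_real_inner_le_norm (g z) (y - z))
  nlinarith [hquad z y, sq_nonneg (‖g z‖ - k * ‖y - z‖)]

variable [CompleteSpace F]

theorem HasGradientAt.add_inner_left {f : F → ℝ} {f' y : F} (hf : HasGradientAt f f' y) (c : F) :
    HasGradientAt (fun z => f z + ⟪c, z⟫) (f' + c) y := by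
  rw [hasGradientAt_iff_hasFDerivAt, map_add]
  exact hf.hasFDerivAt.add (toDual ℝ F c).hasFDerivAt

theorem ContDiff.differentiable_gradient {f : F → ℝ} (hf : ContDiff ℝ 2 f) :
    Differentiable ℝ (gradient f) :=
  ((toDual ℝ F).symm.contDiff.comp (hf.fderiv_right (m := 1) (by norm_num))).differentiable
    one_ne_zero

variable {H : F → F →L[ℝ] F}

theorem add_inner_add_sq_le_of_hasFDerivAt_gradient (hg : ∀ y, HasGradientAt L (g y) y)
    (hH : ∀ y, HasFDerivAt g (H y) y) (hconv : ∀ y v, k * ‖v‖ ^ 2 ≤ ⟪v, H y v⟫) (z y : F) :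
    L z + ⟪g z, y - z⟫ + k / 2 * ‖y - z‖ ^ 2 ≤ L y := by
  set d := y - z
  have hline : ∀ s : ℝ, HasDerivAt (fun s : ℝ => z + s • d) d s := fun s => by
    simpa using ((hasDerivAt_id' s).smul_const d).const_add z
  have h := add_deriv_add_half_le_of_le_second_deriv (φ := fun s => L (z + s • d))
    (φ' := fun s => ⟪g (z + s • d), d⟫) (φ'' := fun s => ⟪d, H (z + s • d) d⟫) (κ := k * ‖d‖ ^ 2)
    (fun s => (hg _).hasFDerivAt.comp_hasDerivAt s (hline s))
    (fun s => by
      refine (((hH _).comp_hasDerivAt s (hline s)).inner ℝ (hasDerivAt_const s d)).congr_deriv ?_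
      simp [real_inner_comm])
    (fun s => hconv _ d)
  simp only [zero_smul, add_zero, one_smul, d, add_sub_cancel] at h
  linarith

theorem eq_of_hasDerivAt_of_inner_gradient_le (hk : 0 < k) (hg : ∀ y, HasGradientAt L (g y) y)
    (hH : ∀ y, HasFDerivAt g (H y) y) (hconv : ∀ y v, k * ‖v‖ ^ 2 ≤ ⟪v, H y v⟫) {xstar : F}
    (hstar : g xstar = 0) {d₁ d₂ a₁ a₂ t : ℝ} (hd₁ : 0 < d₁) (hd₂ : 0 < d₂) (ha₁ : 0 ≤ a₁)
    (ha₁' : a₁ < 2) (ha₂ : 2 < a₂) {x x' : ℝ → F} (hx : ∀ s, 0 ≤ s → HasDerivAt x (x' s) s)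
    (hx' : ∀ s, 0 ≤ s → ⟪g (x s), x' s⟫ ≤ -(d₁ * ‖g (x s)‖ ^ a₁) - d₂ * ‖g (x s)‖ ^ a₂)
    (ht : 2 ^ (1 - a₁ / 2) / (d₁ * k * (2 - a₁)) + 2 ^ (1 - a₂ / 2) / (d₂ * k * (a₂ - 2)) ≤ t) :
    x t = xstar := by
  have hquad := add_inner_add_sq_le_of_hasFDerivAt_gradient hg hH hconv
  have hgrowth : ∀ y, k / 2 * ‖y - xstar‖ ^ 2 ≤ L y - L xstar := fun y => by
    linarith [hquad xstar y, show ⟪g xstar, y - xstar⟫ = 0 by rw [hstar, inner_zero_left]]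
  set u := fun s => L (x s) - L xstar
  have hu₀ : ∀ s, 0 ≤ u s := fun s =>
    (by positivity : (0 : ℝ) ≤ k / 2 * _).trans (hgrowth (x s))
  have hdecay : ∀ a d : ℝ, 0 ≤ a → 0 ≤ d → ∀ s,
      d * (2 * k) ^ (a / 2) * u s ^ (a / 2) ≤ d * ‖g (x s)‖ ^ a := fun a d ha hd s => by
    rw [mul_assoc, ← Real.mul_rpow (x := 2 * k) (by positivity) (hu₀ s)]
    exact mul_le_mul_of_nonneg_left (Real.rpow_div_two_le_rpow_of_le_sq
      (mul_nonneg (by positivity) (hu₀ s)) (norm_nonneg _)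
      (two_mul_mul_sub_le_norm_sq hk hquad _ _) ha) hd
  have hu : u t = 0 := eq_zero_of_hasDerivAt_le_neg_rpow_sub_rpow (M := k⁻¹)
    (u' := fun s => ⟪g (x s), x' s⟫) (c₁ := d₁ * (2 * k) ^ (a₁ / 2))
    (c₂ := d₂ * (2 * k) ^ (a₂ / 2)) (γ₁ := a₁ / 2) (γ₂ := a₂ / 2) (by positivity)
    (by positivity) (by linarith) (by linarith) (inv_pos.2 hk)
    (fun s hs => ((hg (x s)).hasFDerivAt.comp_hasDerivAt s (hx s hs)).sub_const _)
    (fun s _ => hu₀ s)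
    (fun s hs => by
      linarith [hx' s hs, hdecay a₁ d₁ ha₁ hd₁.le s, hdecay a₂ d₂ (by linarith) hd₂.le s])
    (Eq.trans_le (by rw [Real.inv_rpow_div_mul_rpow hk, Real.inv_rpow_div_mul_rpow hk]; ring) ht)
  have hnorm : ‖x t - xstar‖ ^ 2 ≤ 0 := by nlinarith [hgrowth (x t)]
  rw [← sub_eq_zero, ← norm_eq_zero]
  exact pow_eq_zero_iff two_ne_zero |>.1 (le_antisymm hnorm (sq_nonneg _))

end GradientFlow

theorem fixed_time_equality_constrained_general
    {n m : ℕ} (f : EuclideanSpace ℝ (Fin n) → ℝ) (hf : ContDiff ℝ 2 f)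
    (k : ℝ) (hk : 0 < k)
    (hconv : ∀ x v : EuclideanSpace ℝ (Fin n),
      k * ‖v‖ ^ 2 ≤ ⟪v, fderiv ℝ (gradient f) x v⟫)
    (A : Matrix (Fin m) (Fin n) ℝ)
    (xstar : EuclideanSpace ℝ (Fin n))
    (νstar : EuclideanSpace ℝ (Fin m))
    (hstat : gradient f xstar + Matrix.toEuclideanLin Aᵀ νstar = 0)
    (gradL : EuclideanSpace ℝ (Fin n) → EuclideanSpace ℝ (Fin n))
    (hgradL : gradL = fun y => gradient f y + Matrix.toEuclideanLin Aᵀ νstar)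
    (d₁ d₂ q₁ q₂ : ℝ) (hd₁ : 0 < d₁) (hd₂ : 0 < d₂)
    (hq₁ : 2 < q₁) (hq₂ : 1 < q₂) (hq₂' : q₂ < 2)
    (a₁ a₂ : ℝ) (ha₁ : a₁ = 2 - (q₁ - 2) / (q₁ - 1)) (ha₂ : a₂ = 2 - (q₂ - 2) / (q₂ - 1))
    (x : ℝ → EuclideanSpace ℝ (Fin n))
    (hx : ∀ t : ℝ, 0 ≤ t → HasDerivAt x
      (if gradL (x t) = 0 then 0
       else -((d₁ / ‖gradL (x t)‖ ^ ((q₁ - 2) / (q₁ - 1))) • gradL (x t))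
            - (d₂ / ‖gradL (x t)‖ ^ ((q₂ - 2) / (q₂ - 1))) • gradL (x t)) t) :
    ∀ t : ℝ,
      2 ^ (1 - a₁ / 2) / (d₁ * k * (2 - a₁)) + 2 ^ (1 - a₂ / 2) / (d₂ * k * (a₂ - 2)) ≤ t →
      x t = xstar := by
  intro t ht
  have hp₁ : (q₁ - 2) / (q₁ - 1) = 2 - a₁ := by rw [ha₁]; ring
  have hp₂ : (q₂ - 2) / (q₂ - 1) = 2 - a₂ := by rw [ha₂]; ring
  have hp₁pos : 0 < (q₁ - 2) / (q₁ - 1) := div_pos (by linarith) (by linarith)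
  have hp₁lt : (q₁ - 2) / (q₁ - 1) < 2 := (div_lt_iff₀ (by linarith)).2 (by linarith)
  have hp₂neg : (q₂ - 2) / (q₂ - 1) < 0 := div_neg_of_neg_of_pos (by linarith) (by linarith)
  rw [hp₁, hp₂] at hx
  subst hgradL
  set c := Matrix.toEuclideanLin Aᵀ νstar
  exact eq_of_hasDerivAt_of_inner_gradient_le (L := fun y => f y + ⟪c, y⟫) hk
    (fun y => ((hf.differentiable (by norm_num) y).hasGradientAt).add_inner_left c)
    (fun y => (hf.differentiable_gradient y).hasFDerivAt.add_const c) hconv hstat hd₁ hd₂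
    (by linarith) (by linarith) (by linarith) hx
    (fun s _ => (inner_ite_neg_div_rpow_smul_sub _ (by linarith) (by linarith)).le) ht

/-- Fixed-time convergence to the optimizer of the equality-constrained problem
`min f(x) s.t. Ax = b`: with `ν*` the dual optimal multiplier satisfying
`∇f(x*) + Aᵀν* = 0` and `∇L(x) = ∇f(x) + Aᵀν*`, every trajectory of the two-term rescaled
flow on `L` reaches `x*` within the fixed time
`T_x = 2^{1−a₁/2}/(d₁k(2−a₁)) + 2^{1−a₂/2}/(d₂k(a₂−2))`. -/
theorem fixed_time_equality_constrained
    {n m : ℕ} (f : EuclideanSpace ℝ (Fin n) → ℝ) (hf : ContDiff ℝ 2 f)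
    (k : ℝ) (hk : 0 < k)
    (hconv : ∀ x v : EuclideanSpace ℝ (Fin n),
      k * ‖v‖ ^ 2 ≤ ⟪v, fderiv ℝ (gradient f) x v⟫)
    (A : Matrix (Fin m) (Fin n) ℝ) (hA : A.rank = m) (b : EuclideanSpace ℝ (Fin m))
    (xstar : EuclideanSpace ℝ (Fin n))
    (hfeas : Matrix.toEuclideanLin A xstar = b)
    (hopt : ∀ y : EuclideanSpace ℝ (Fin n), Matrix.toEuclideanLin A y = b → f xstar ≤ f y)
    (huniq : ∀ y : EuclideanSpace ℝ (Fin n),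
      Matrix.toEuclideanLin A y = b → f y = f xstar → y = xstar)
    (νstar : EuclideanSpace ℝ (Fin m))
    (hstat : gradient f xstar + Matrix.toEuclideanLin Aᵀ νstar = 0)
    (gradL : EuclideanSpace ℝ (Fin n) → EuclideanSpace ℝ (Fin n))
    (hgradL : gradL = fun y => gradient f y + Matrix.toEuclideanLin Aᵀ νstar)
    (d₁ d₂ q₁ q₂ : ℝ) (hd₁ : 0 < d₁) (hd₂ : 0 < d₂)
    (hq₁ : 2 < q₁) (hq₂ : 1 < q₂) (hq₂' : q₂ < 2)
    (a₁ a₂ : ℝ) (ha₁ : a₁ = 2 - (q₁ - 2) / (q₁ - 1)) (ha₂ : a₂ = 2 - (q₂ - 2) / (q₂ - 1))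
    (x : ℝ → EuclideanSpace ℝ (Fin n))
    (hx : ∀ t : ℝ, 0 ≤ t → HasDerivAt x
      (if gradL (x t) = 0 then 0
       else -((d₁ / ‖gradL (x t)‖ ^ ((q₁ - 2) / (q₁ - 1))) • gradL (x t))
            - (d₂ / ‖gradL (x t)‖ ^ ((q₂ - 2) / (q₂ - 1))) • gradL (x t)) t) :
    ∀ t : ℝ,
      2 ^ (1 - a₁ / 2) / (d₁ * k * (2 - a₁)) + 2 ^ (1 - a₂ / 2) / (d₂ * k * (a₂ - 2)) ≤ t →
      x t = xstar :=
  fixed_time_equality_constrained_general f hf k hk hconv A xstar νstar hstat gradL hgradL d₁ d₂ q₁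
    q₂ hd₁ hd₂ hq₁ hq₂ hq₂' a₁ a₂ ha₁ ha₂ x hx
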